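/- arXiv:1905.00228 — 5 statements merged into one kernel-verified Lean document; each statement's English description precedes it below -/
import Mathlib

section
/- Assume positivity is inherited from 𝔓₁ to 𝔓₂. Then the set of bounded operators on ℌ₁ of the form ξ ↦ π(Aξ) (for ξ ∈ ℌ₁), where A ranges over all bounded operators on ℌ₂ with A𝔓₂ ⊆ 𝔓₂, coincides exactly with the set of all bounded operators B on ℌ₁ with B𝔓₁ ⊆ 𝔓₁. In particular: (a) for every bounded A on ℌ₂ with A𝔓₂ ⊆ 𝔓₂, the compression ξ ↦ π(Aξ) preserves 𝔓₁; (b) every bounded B on ℌ₁ with B𝔓₁ ⊆ 𝔓₁ is the compression of some bounded A on ℌ₂ with A𝔓₂ ⊆ 𝔓₂ (namely A = B ⊕ 0 with respect to ℌ₂ = ℌ₁ ⊕ ℌ₁⊥). -/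
open scoped ComplexOrder

noncomputable section

variable {H : Type*} [NormedAddCommGroup H] [InnerProductSpace ℂ H]

/-- A self-dual cone in a complex Hilbert space: a closed convex subset,
stable under multiplication by nonnegative reals, equal to its dual cone. -/
def IsSelfDualCone (P : Set H) : Prop :=
  IsClosed P ∧ Convex ℝ P ∧ (∀ t : ℝ, 0 ≤ t → ∀ x ∈ P, t • x ∈ P) ∧
    P = {η : H | ∀ ξ ∈ P, 0 ≤ (inner ℂ η ξ : ℂ)}

/-- `A ⊵ 0` w.r.t. `P`: the operator `A` preserves the positivity. -/
def PosPres (P : Set H) (A : H →L[ℂ] H) : Prop := ∀ x ∈ P, A x ∈ P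

/-- `η > 0` w.r.t. `P`: the vector `η` is strictly positive. -/
def StrictPos (P : Set H) (η : H) : Prop :=
  η ∈ P ∧ ∀ ξ ∈ P, ξ ≠ 0 → 0 < (inner ℂ ξ η : ℂ)

/-- Positivity is inherited from the self-dual cone `P₁` of the closed subspace `K`
to the self-dual cone `P₂` of the ambient space: `P₁ = π P₂` and `π ⊵ 0` w.r.t. `P₂`,
where `π` is the orthogonal projection onto `K`. -/
def Inherits {H₂ : Type*} [NormedAddCommGroup H₂] [InnerProductSpace ℂ H₂] [CompleteSpace H₂]
    (K : Submodule ℂ H₂) [CompleteSpace K] (P₁ : Set K) (P₂ : Set H₂) : Prop :=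
  P₁ = (fun x => K.orthogonalProjectionOnto x) '' P₂ ∧
    ∀ x ∈ P₂, ((K.orthogonalProjectionOnto x : H₂)) ∈ P₂

namespace Submodule

variable (K : Submodule ℂ H) [CompleteSpace K]

def compression (A : H →L[ℂ] H) : K →L[ℂ] K :=
  K.orthogonalProjectionOnto ∘L A ∘L K.subtypeL

@[simp]
theorem compression_apply (A : H →L[ℂ] H) (ξ : K) :
    K.compression A ξ = K.orthogonalProjectionOnto (A ξ) :=
  rfl

/-- The operator `B ⊕ 0` on `H = K ⊕ Kᗮ`. -/
def extendByZero (B : K →L[ℂ] K) : H →L[ℂ] H :=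
  K.subtypeL ∘L B ∘L K.orthogonalProjectionOnto

@[simp]
theorem compression_extendByZero (B : K →L[ℂ] K) : K.compression (K.extendByZero B) = B := by
  ext ξ
  simp [extendByZero, orthogonalProjectionOnto_mem_subspace_eq_self]

end Submodule

namespace Inherits

variable {H₂ : Type*} [NormedAddCommGroup H₂] [InnerProductSpace ℂ H₂] [CompleteSpace H₂]
  {K : Submodule ℂ H₂} [CompleteSpace K] {P₁ : Set K} {P₂ : Set H₂}

theorem orthogonalProjectionOnto_mem (hinh : Inherits K P₁ P₂) {x : H₂} (hx : x ∈ P₂) :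
    K.orthogonalProjectionOnto x ∈ P₁ :=
  hinh.1 ▸ ⟨x, hx, rfl⟩

theorem coe_mem (hinh : Inherits K P₁ P₂) {ξ : K} (hξ : ξ ∈ P₁) : (ξ : H₂) ∈ P₂ := by
  rw [hinh.1] at hξ
  obtain ⟨x, hx, rfl⟩ := hξ
  exact hinh.2 x hx

theorem posPres_compression (hinh : Inherits K P₁ P₂) {A : H₂ →L[ℂ] H₂} (hA : PosPres P₂ A) :
    PosPres P₁ (K.compression A) :=
  fun _ hξ => hinh.orthogonalProjectionOnto_mem (hA _ (hinh.coe_mem hξ))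

theorem posPres_extendByZero (hinh : Inherits K P₁ P₂) {B : K →L[ℂ] K} (hB : PosPres P₁ B) :
    PosPres P₂ (K.extendByZero B) :=
  fun _ hx => hinh.coe_mem (hB _ (hinh.orthogonalProjectionOnto_mem hx))

end Inherits

theorem compression_posPres_eq_general {H₂ : Type*} [NormedAddCommGroup H₂] [InnerProductSpace ℂ H₂]
    [CompleteSpace H₂] (K : Submodule ℂ H₂) [CompleteSpace K]
    (P₁ : Set K) (P₂ : Set H₂)
    (hinh : Inherits K P₁ P₂) :
    {B : K →L[ℂ] K | ∃ A : H₂ →L[ℂ] H₂, PosPres P₂ A ∧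
        ∀ ξ : K, B ξ = K.orthogonalProjectionOnto (A ξ)}
      = {B : K →L[ℂ] K | PosPres P₁ B} := by
  ext B
  constructor
  · rintro ⟨A, hA, hBA⟩
    have hB : B = K.compression A := ContinuousLinearMap.ext hBA
    exact hB ▸ hinh.posPres_compression hA
  · intro hB
    refine ⟨K.extendByZero B, hinh.posPres_extendByZero hB, fun ξ => ?_⟩
    rw [← K.compression_apply, K.compression_extendByZero]

/-- Proposition 2.4: if positivity is inherited from `P₁` to `P₂`, then the compressions
`ξ ↦ π (A ξ)` of the positivity preserving operators `A` on `H₂` are exactly the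
positivity preserving operators on `K`. -/
theorem compression_posPres_eq {H₂ : Type*} [NormedAddCommGroup H₂] [InnerProductSpace ℂ H₂]
    [CompleteSpace H₂] (K : Submodule ℂ H₂) [CompleteSpace K]
    (P₁ : Set K) (P₂ : Set H₂) (hP₁ : IsSelfDualCone P₁) (hP₂ : IsSelfDualCone P₂)
    (hinh : Inherits K P₁ P₂) :
    {B : K →L[ℂ] K | ∃ A : H₂ →L[ℂ] H₂, PosPres P₂ A ∧
        ∀ ξ : K, B ξ = K.orthogonalProjectionOnto (A ξ)}
      = {B : K →L[ℂ] K | PosPres P₁ B} :=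
  compression_posPres_eq_general K P₁ P₂ hinh
end
end

section
/- Let 𝔓 be a self-dual cone in a complex Hilbert space ℌ and let H, H' be bounded self-adjoint operators on ℌ such that e^{−βH} ⊵ 0 w.r.t. 𝔓 and e^{−βH'} ⊵ 0 w.r.t. 𝔓 for all β ≥ 0. Then for all s ≥ 0, t ≥ 0 and all β ≥ 0, e^{−β(sH + tH')} ⊵ 0 w.r.t. 𝔓. -/
/-!
By the Lie–Trotter product formula, `e^{-β(sA + tA')}` is the norm limit of
`(e^{-(βs/n) A} e^{-(βt/n) A'})^n`. Each of these products preserves `P`, and since `P` is closed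
the operators preserving `P` form a closed set, which therefore contains the limit.
The product formula holds in every Banach algebra: for `x, y` of size `O(1/n)` one has
`‖e^{x+y} - e^x e^y‖ = O(1/n²)`, and telescoping `a^n - b^n` loses only a factor `n`.
-/

open scoped ComplexOrder

noncomputable section

variable {H : Type*} [NormedAddCommGroup H] [InnerProductSpace ℂ H]

/-- `A ⊳ 0` w.r.t. `P`: the operator `A` improves the positivity. -/
def PosImp (P : Set H) (A : H →L[ℂ] H) : Prop :=
  ∀ ξ ∈ P, ξ ≠ 0 → StrictPos P (A ξ)

/-- `E(A)`: the infimum of the (real) spectrum of `A`. -/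
def specInf (A : H →L[ℂ] H) : ℝ := sInf {t : ℝ | (t : ℂ) ∈ spectrum ℂ A}

/-- `B` is ergodic w.r.t. `P`. -/
def IsErgodic (P : Set H) (B : H →L[ℂ] H) : Prop :=
  PosPres P B ∧ ∀ ξ ∈ P, ξ ≠ 0 → ∀ η ∈ P, η ≠ 0 → ∃ k : ℕ, 0 < (inner ℂ ξ ((B ^ k) η) : ℂ)


open Filter Finset NormedSpace Topology
open scoped Nat

section ExpEstimates

variable {𝔸 : Type*} [NormedRing 𝔸] [NormOneClass 𝔸] [NormedAlgebra ℚ 𝔸] [CompleteSpace 𝔸]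

theorem norm_exp_sub_sum_le (x : 𝔸) (n : ℕ) :
    ‖exp x - ∑ k ∈ range n, (k !⁻¹ : ℚ) • x ^ k‖ ≤ ‖x‖ ^ n * Real.exp ‖x‖ := by
  have htail : Summable fun k => ‖((k + n)!⁻¹ : ℚ) • x ^ (k + n)‖ :=
    (summable_nat_add_iff n).2 (norm_expSeries_summable' x)
  have hterm (k : ℕ) : ‖((k + n)!⁻¹ : ℚ) • x ^ (k + n)‖ ≤ ‖x‖ ^ n * (‖x‖ ^ k / k !) := by
    calc ‖((k + n)!⁻¹ : ℚ) • x ^ (k + n)‖ = ((k + n)! : ℝ)⁻¹ * ‖x ^ (k + n)‖ := by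
          rw [norm_smul, norm_inv, ← Rat.norm_cast_real, Rat.cast_natCast, Real.norm_natCast]
      _ ≤ (k ! : ℝ)⁻¹ * ‖x‖ ^ (k + n) := by
          gcongr
          exacts [Nat.le_add_right k n, norm_pow_le x _]
      _ = ‖x‖ ^ n * (‖x‖ ^ k / k !) := by ring
  rw [exp_eq_tsum_rat]
  dsimp only
  rw [← (expSeries_summable' (𝕂 := ℚ) x).sum_add_tsum_nat_add n, add_sub_cancel_left,
    Real.exp_eq_exp_ℝ, exp_eq_tsum_div, ← tsum_mul_left]
  exact (norm_tsum_le_tsum_norm htail).trans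
    (htail.tsum_le_tsum hterm ((Real.summable_pow_div_factorial _).mul_left _))

theorem norm_exp_le_exp_norm (x : 𝔸) : ‖exp x‖ ≤ Real.exp ‖x‖ := by
  simpa using norm_exp_sub_sum_le x 0

theorem norm_exp_sub_one_le (x : 𝔸) : ‖exp x - 1‖ ≤ ‖x‖ * Real.exp ‖x‖ := by
  simpa using norm_exp_sub_sum_le x 1

theorem norm_exp_sub_one_sub_le (x : 𝔸) : ‖exp x - 1 - x‖ ≤ ‖x‖ ^ 2 * Real.exp ‖x‖ := by
  simpa [sum_range_succ, sub_sub] using norm_exp_sub_sum_le x 2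

theorem norm_exp_add_sub_exp_mul_exp_le (x y : 𝔸) :
    ‖exp (x + y) - exp x * exp y‖ ≤ 2 * (‖x‖ + ‖y‖) ^ 2 * Real.exp (‖x‖ + ‖y‖) := by
  set a := ‖x‖
  set b := ‖y‖
  have ha : 0 ≤ a := norm_nonneg x
  have hb : 0 ≤ b := norm_nonneg y
  have hb_le : b ≤ a + b := le_add_of_nonneg_left ha
  have h₁ : ‖exp (x + y) - 1 - (x + y)‖ ≤ (a + b) ^ 2 * Real.exp (a + b) :=
    (norm_exp_sub_one_sub_le _).trans (by gcongr <;> exact norm_add_le x y)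
  have h₂ : ‖exp y - 1 - y‖ ≤ b ^ 2 * Real.exp (a + b) :=
    (norm_exp_sub_one_sub_le y).trans (by gcongr)
  have h₃ : ‖x * (exp y - 1)‖ ≤ a * (b * Real.exp (a + b)) :=
    (norm_mul_le _ _).trans (by gcongr; exact (norm_exp_sub_one_le y).trans (by gcongr))
  have h₄ : ‖(exp x - 1 - x) * exp y‖ ≤ a ^ 2 * Real.exp (a + b) := by
    rw [Real.exp_add, ← mul_assoc]
    exact (norm_mul_le _ _).trans
      (mul_le_mul (norm_exp_sub_one_sub_le x) (norm_exp_le_exp_norm y) (norm_nonneg _)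
        (by positivity))
  have hsplit : exp (x + y) - exp x * exp y =
      (exp (x + y) - 1 - (x + y)) - (exp y - 1 - y) - x * (exp y - 1)
        - (exp x - 1 - x) * exp y := by
    noncomm_ring
  rw [hsplit]
  calc _ ≤ ‖exp (x + y) - 1 - (x + y)‖ + ‖exp y - 1 - y‖ + ‖x * (exp y - 1)‖
          + ‖(exp x - 1 - x) * exp y‖ :=
        (norm_sub_le _ _).trans
          (add_le_add_left ((norm_sub_le _ _).trans (add_le_add_left (norm_sub_le _ _) _)) _)
    _ ≤ 2 * (a + b) ^ 2 * Real.exp (a + b) := by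
      nlinarith [mul_nonneg (mul_nonneg ha hb) (Real.exp_pos (a + b)).le]

end ExpEstimates

theorem norm_pow_sub_pow_le {𝔸 : Type*} [NormedRing 𝔸] [NormOneClass 𝔸] {a b : 𝔸} {M : ℝ}
    (hM : 1 ≤ M) (ha : ‖a‖ ≤ M) (hb : ‖b‖ ≤ M) (n : ℕ) :
    ‖a ^ n - b ^ n‖ ≤ n * M ^ n * ‖a - b‖ := by
  induction n with
  | zero => simp
  | succ n ih =>
    have hsplit : a ^ (n + 1) - b ^ (n + 1) = (a ^ n - b ^ n) * a + b ^ n * (a - b) := by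
      noncomm_ring
    have h₁ : ‖(a ^ n - b ^ n) * a‖ ≤ n * M ^ n * ‖a - b‖ * M :=
      (norm_mul_le _ _).trans (by gcongr)
    have h₂ : ‖b ^ n * (a - b)‖ ≤ M ^ (n + 1) * ‖a - b‖ :=
      (norm_mul_le _ _).trans (by
        gcongr
        exact (norm_pow_le b n).trans
          ((pow_le_pow_left₀ (norm_nonneg b) hb n).trans (pow_le_pow_right₀ hM n.le_succ)))
    rw [hsplit]
    refine (norm_add_le _ _).trans ((add_le_add h₁ h₂).trans_eq ?_)
    push_cast
    ring

section Trotter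

variable {𝕂 𝔸 : Type*} [RCLike 𝕂] [NormedRing 𝔸] [NormOneClass 𝔸] [NormedAlgebra 𝕂 𝔸]
  [CompleteSpace 𝔸]

theorem norm_exp_add_sub_trotter_pow_le (X Y : 𝔸) {n : ℕ} (hn : n ≠ 0) :
    ‖exp (X + Y) - (exp ((n : 𝕂)⁻¹ • X) * exp ((n : 𝕂)⁻¹ • Y)) ^ n‖
      ≤ 2 * (‖X‖ + ‖Y‖) ^ 2 * Real.exp (‖X‖ + ‖Y‖) ^ 2 / n := by
  let _ : NormedAlgebra ℚ 𝔸 := NormedAlgebra.restrictScalars ℚ 𝕂 𝔸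
  set r := ‖X‖ + ‖Y‖
  set U := (n : 𝕂)⁻¹ • X
  set V := (n : 𝕂)⁻¹ • Y
  have hn₀ : (0 : ℝ) < n := by positivity
  have hUV : ‖U‖ + ‖V‖ = r / n := by
    simp only [U, V, r, norm_smul, norm_inv, RCLike.norm_natCast]
    ring
  have hr : 0 ≤ r / n := by positivity
  have hexp : exp (X + Y) = exp (U + V) ^ n := by
    rw [← exp_nsmul, ← smul_add, ← Nat.cast_smul_eq_nsmul 𝕂, smul_smul,
      mul_inv_cancel₀ (Nat.cast_ne_zero.2 hn), one_smul]
  have ha : ‖exp (U + V)‖ ≤ Real.exp (r / n) :=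
    (norm_exp_le_exp_norm _).trans (Real.exp_le_exp.2 ((norm_add_le _ _).trans hUV.le))
  have hb : ‖exp U * exp V‖ ≤ Real.exp (r / n) := by
    rw [← hUV, Real.exp_add]
    exact (norm_mul_le _ _).trans (mul_le_mul (norm_exp_le_exp_norm U) (norm_exp_le_exp_norm V)
      (norm_nonneg _) (Real.exp_pos _).le)
  have hab : ‖exp (U + V) - exp U * exp V‖ ≤ 2 * (r / n) ^ 2 * Real.exp r := by
    refine (norm_exp_add_sub_exp_mul_exp_le U V).trans ?_
    rw [hUV]
    gcongr
    exact div_le_self (by positivity) (Nat.one_le_cast.2 (Nat.one_le_iff_ne_zero.2 hn))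
  have hpow : Real.exp (r / n) ^ n = Real.exp r := by
    rw [← Real.exp_nat_mul, mul_div_cancel₀ _ hn₀.ne']
  rw [hexp]
  calc _ ≤ n * Real.exp (r / n) ^ n * ‖exp (U + V) - exp U * exp V‖ :=
        norm_pow_sub_pow_le (Real.one_le_exp hr) ha hb n
    _ ≤ n * Real.exp r * (2 * (r / n) ^ 2 * Real.exp r) := by rw [hpow]; gcongr
    _ = 2 * r ^ 2 * Real.exp r ^ 2 / n := by field_simp

theorem tendsto_trotter_product (X Y : 𝔸) :
    Tendsto (fun n : ℕ => (exp ((n : 𝕂)⁻¹ • X) * exp ((n : 𝕂)⁻¹ • Y)) ^ n) atTop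
      (𝓝 (exp (X + Y))) := by
  rw [tendsto_iff_norm_sub_tendsto_zero]
  refine squeeze_zero' (Eventually.of_forall fun _ => norm_nonneg _) ?_
    (tendsto_const_div_atTop_nhds_zero_nat (2 * (‖X‖ + ‖Y‖) ^ 2 * Real.exp (‖X‖ + ‖Y‖) ^ 2))
  filter_upwards [eventually_ne_atTop 0] with n hn
  rw [norm_sub_rev]
  exact norm_exp_add_sub_trotter_pow_le X Y hn

end Trotter

section PositivityPreserving

variable {P : Set H}

theorem PosPres.mul {A B : H →L[ℂ] H} (hA : PosPres P A) (hB : PosPres P B) :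
    PosPres P (A * B) :=
  fun x hx => hA _ (hB x hx)

theorem PosPres.pow {A : H →L[ℂ] H} (hA : PosPres P A) (n : ℕ) : PosPres P (A ^ n) := by
  induction n with
  | zero => exact fun x hx => hx
  | succ n ih => rw [pow_succ]; exact ih.mul hA

theorem isClosed_setOf_posPres (hP : IsClosed P) : IsClosed {A : H →L[ℂ] H | PosPres P A} := by
  simp only [PosPres, Set.ofPred_forall]
  exact isClosed_iInter fun x => isClosed_iInter fun _ =>
    hP.preimage (ContinuousLinearMap.apply ℂ H x).continuous

end PositivityPreserving

theorem exp_combination_posPres_general [CompleteSpace H] (P : Set H) (hP : IsSelfDualCone P)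
    (A A' : H →L[ℂ] H)
    (hexpA : ∀ β : ℝ, 0 ≤ β → PosPres P (NormedSpace.exp (-(β : ℂ) • A)))
    (hexpA' : ∀ β : ℝ, 0 ≤ β → PosPres P (NormedSpace.exp (-(β : ℂ) • A'))) :
    ∀ s t β : ℝ, 0 ≤ s → 0 ≤ t → 0 ≤ β →
      PosPres P (NormedSpace.exp (-(β : ℂ) • ((s : ℂ) • A + (t : ℂ) • A'))) := by
  intro s t β hs ht hβ
  -- the operator norm satisfies `‖1‖ = 1`, needed by the exponential estimates, only if `H ≠ 0`
  rcases subsingleton_or_nontrivial H with _ | _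
  · intro x hx
    convert hx using 1
  have hsplit : -(β : ℂ) • ((s : ℂ) • A + (t : ℂ) • A') =
      -((β * s : ℝ) : ℂ) • A + -((β * t : ℝ) : ℂ) • A' := by
    push_cast
    module
  have hstep (c : ℝ) (n : ℕ) (B : H →L[ℂ] H) :
      (n : ℂ)⁻¹ • (-(c : ℂ) • B) = -((c / n : ℝ) : ℂ) • B := by
    rw [smul_smul]
    push_cast
    ring_nf
  rw [hsplit]
  refine (isClosed_setOf_posPres hP.1).mem_of_tendsto (tendsto_trotter_product (𝕂 := ℂ) _ _)
    (Eventually.of_forall fun n => ?_)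
  rw [Set.mem_ofPred_eq, hstep, hstep]
  exact ((hexpA _ (by positivity)).mul (hexpA' _ (by positivity))).pow n

/-- Proposition 2.2 (via the Trotter product formula): if `e^{-βH}` and `e^{-βH'}`
preserve positivity w.r.t. `P` for all `β ≥ 0`, then so does `e^{-β(sH + tH')}`
for all `s, t, β ≥ 0`. -/
theorem exp_combination_posPres [CompleteSpace H] (P : Set H) (hP : IsSelfDualCone P)
    (A A' : H →L[ℂ] H) (hA : IsSelfAdjoint A) (hA' : IsSelfAdjoint A')
    (hexpA : ∀ β : ℝ, 0 ≤ β → PosPres P (NormedSpace.exp (-(β : ℂ) • A)))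
    (hexpA' : ∀ β : ℝ, 0 ≤ β → PosPres P (NormedSpace.exp (-(β : ℂ) • A'))) :
    ∀ s t β : ℝ, 0 ≤ s → 0 ≤ t → 0 ≤ β →
      PosPres P (NormedSpace.exp (-(β : ℂ) • ((s : ℂ) • A + (t : ℂ) • A'))) :=
  exp_combination_posPres_general P hP A A' hexpA hexpA'
end
end

section
/- Let A be a bounded self-adjoint operator on a nontrivial complex Hilbert space ℌ equipped with a self-dual cone 𝔓. Assume that e^{−βA} ⊵ 0 w.r.t. 𝔓 for all β ≥ 0 and that E(A), the infimum of the spectrum of A, is an eigenvalue of A. Then there exists a nonzero vector ξ ∈ ker(A − E(A)) with ξ ∈ 𝔓. -/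
open scoped ComplexOrder

noncomputable section

variable {H : Type*} [NormedAddCommGroup H] [InnerProductSpace ℂ H]

/-!
Let `C = A - E(A) ≥ 0`, so that `T_β = e^{-βC}` is a contraction, preserves `𝔓` (it is a positive
multiple of `e^{-βA}`) and fixes every vector of `ker C`. Take `ξ ∈ ker C` pairing positively with
some element of `𝔓`, and let `η` be the point of `𝔓` nearest to `ξ`; then `η ≠ 0`. Since
`‖ξ - T_β η‖ = ‖T_β (ξ - η)‖ ≤ ‖ξ - η‖` and `T_β η ∈ 𝔓`, uniqueness of the nearest point gives
`T_β η = η` for all `β ≥ 0`, and differentiating at `β = 0` yields `C η = 0`.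
-/

open Set

section NearestPoint

variable {F : Type*} [NormedAddCommGroup F] [InnerProductSpace ℝ F]

lemma eq_of_norm_sub_eq_iInf {K : Set F} (hK : Convex ℝ K) {u v w : F} (hv : v ∈ K) (hw : w ∈ K)
    (hvmin : ‖u - v‖ = ⨅ x : K, ‖u - x‖) (hwmin : ‖u - w‖ = ⨅ x : K, ‖u - x‖) : v = w := by
  have hv' := (norm_eq_iInf_iff_real_inner_le_zero hK hv).1 hvmin w hw
  have hw' := (norm_eq_iInf_iff_real_inner_le_zero hK hw).1 hwmin v hv
  have hsum : inner ℝ (w - v) (w - v) = inner ℝ (u - v) (w - v) + inner ℝ (u - w) (v - w) := by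
    rw [← neg_sub w v, inner_neg_right, ← sub_eq_add_neg, ← inner_sub_left,
      sub_sub_sub_cancel_left]
  exact (sub_eq_zero.1 (real_inner_self_nonpos.1 (by linarith))).symm

lemma LipschitzWith.apply_eq_of_norm_sub_eq_iInf {K : Set F} (hK : Convex ℝ K) {u v : F}
    (hv : v ∈ K) (hmin : ‖u - v‖ = ⨅ x : K, ‖u - x‖) {T : F → F} (hT : LipschitzWith 1 T)
    (hTK : MapsTo T K K) (hTu : T u = u) : T v = v := by
  have hle : ‖u - T v‖ ≤ ‖u - v‖ := by
    simpa [hTu, dist_eq_norm] using hT.dist_le_mul u v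
  have hbdd : BddBelow (range fun x : K => ‖u - x‖) :=
    ⟨0, by rintro _ ⟨x, rfl⟩; exact norm_nonneg _⟩
  exact eq_of_norm_sub_eq_iInf hK (hTK hv) hv
    (le_antisymm (hle.trans hmin.le) (ciInf_le hbdd ⟨T v, hTK hv⟩)) hmin

end NearestPoint

section Exponential

variable {E : Type*} [NormedAddCommGroup E] [NormedSpace ℂ E] [CompleteSpace E]

lemma hasDerivAt_exp_smul_apply (x : E →L[ℂ] E) (v : E) (t : ℝ) :
    HasDerivAt (fun s : ℝ => NormedSpace.exp (s • x) v) (NormedSpace.exp (t • x) (x v)) t := by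
  simpa [Function.comp_def, mul_apply_eq_comp] using
    ((ContinuousLinearMap.apply ℂ E v).restrictScalars ℝ).hasFDerivAt.comp_hasDerivAt t
      (hasDerivAt_exp_smul_const (𝕂 := ℝ) x t)

lemma exp_smul_apply_eq_self_iff {x : E →L[ℂ] E} {v : E} :
    (∀ t : ℝ, 0 ≤ t → NormedSpace.exp (t • x) v = v) ↔ x v = 0 := by
  constructor
  · intro hfix
    have hconst : HasDerivWithinAt (fun s : ℝ => NormedSpace.exp (s • x) v) 0 (Ici 0) 0 :=
      (hasDerivWithinAt_const 0 (Ici 0) v).congr (fun s hs => hfix s hs) (hfix 0 le_rfl)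
    have hx := (hasDerivAt_exp_smul_apply x v 0).hasDerivWithinAt (s := Ici 0)
    rw [zero_smul, NormedSpace.exp_zero, one_apply_eq_self] at hx
    exact (uniqueDiffWithinAt_Ici 0).eq_deriv _ hx hconst
  · intro hxv t _
    have hder : ∀ s : ℝ, HasDerivAt (fun s : ℝ => NormedSpace.exp (s • x) v) 0 s := fun s => by
      simpa [hxv] using hasDerivAt_exp_smul_apply x v s
    simpa [NormedSpace.exp_zero] using is_const_of_deriv_eq_zero
      (fun s => (hder s).differentiableAt) (fun s => (hder s).deriv) t 0

end Exponential

lemma exp_smul_neg_sub_smul_one {𝔸 : Type*} [NormedRing 𝔸] [NormedAlgebra ℂ 𝔸] [CompleteSpace 𝔸]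
    (a : 𝔸) (c β : ℝ) :
    NormedSpace.exp (β • -(a - (c : ℂ) • 1)) =
      Real.exp (β * c) • NormedSpace.exp (-(β : ℂ) • a) := by
  have hsplit : β • -(a - (c : ℂ) • 1) = -(β : ℂ) • a + algebraMap ℂ 𝔸 ((β * c : ℝ) : ℂ) := by
    rw [Algebra.algebraMap_eq_smul_one, ← Complex.coe_smul]
    push_cast
    module
  let : NormedAlgebra ℚ 𝔸 := NormedAlgebra.restrictScalars ℚ ℂ 𝔸
  rw [hsplit, NormedSpace.exp_add_of_commute (Algebra.commutes _ _).symm,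
    ← NormedSpace.algebraMap_exp_comm, ← Complex.exp_eq_exp_ℂ, ← Complex.ofReal_exp,
    ← Algebra.commutes, ← Algebra.smul_def, Complex.coe_smul]

lemma norm_exp_smul_neg_le_one {A : Type*} [CStarAlgebra A] {a : A} (ha : IsSelfAdjoint a)
    (hspec : ∀ x ∈ spectrum ℝ a, 0 ≤ x) {β : ℝ} (hβ : 0 ≤ β) :
    ‖NormedSpace.exp (β • -a)‖ ≤ 1 := by
  rw [smul_neg, ← neg_smul,
    ← CFC.real_exp_eq_normedSpace_exp (IsSelfAdjoint.smul (star_trivial (-β)) ha),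
    ← cfc_comp_smul (-β) Real.exp a (by fun_prop) ha]
  refine norm_cfc_le zero_le_one fun x hx => ?_
  rw [Real.norm_eq_abs, Real.abs_exp, Real.exp_le_one_iff, smul_eq_mul, neg_mul, neg_nonpos]
  exact mul_nonneg hβ (hspec x hx)

section SpecInf

variable [CompleteSpace H] [Nontrivial H]

lemma specInf_le_of_mem_spectrum {A : H →L[ℂ] H} {t : ℝ} (ht : (t : ℂ) ∈ spectrum ℂ A) :
    specInf A ≤ t :=
  csInf_le ⟨-‖A‖, fun s hs => neg_le_of_abs_le <| by
    simpa using spectrum.norm_le_norm_of_mem (𝕜 := ℂ) hs⟩ ht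

lemma spectrum_sub_specInf_nonneg (A : H →L[ℂ] H) :
    ∀ x ∈ spectrum ℝ (A - (specInf A : ℂ) • 1), 0 ≤ x := by
  intro x hx
  have hx' := (spectrum.add_mem_add_iff (r := (x : ℂ)) (s := (specInf A : ℂ))).2
    ((spectrum.algebraMap_mem_iff ℂ).2 hx)
  rw [Algebra.algebraMap_eq_smul_one, add_sub_cancel] at hx'
  linarith [specInf_le_of_mem_spectrum (t := x + specInf A) (by exact_mod_cast hx')]

end SpecInf

namespace IsSelfDualCone

variable {P : Set H} (hP : IsSelfDualCone P)
include hP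

lemma mem_iff {η : H} : η ∈ P ↔ ∀ ξ ∈ P, 0 ≤ (inner ℂ η ξ : ℂ) := by
  conv_lhs => rw [hP.2.2.2]
  rfl

lemma exists_inner_ne_zero {ξ : H} (hξ : ξ ≠ 0) : ∃ ζ ∈ P, inner ℂ ξ ζ ≠ 0 := by
  by_contra! h
  exact hξ (inner_self_eq_zero.1 (h ξ (hP.mem_iff.2 fun ζ hζ => (h ζ hζ).ge)))

lemma exists_mem_re_inner_pos {S : Submodule ℂ H} (hS : S ≠ ⊥) :
    ∃ ξ ∈ S, ∃ ζ ∈ P, 0 < (inner ℂ ξ ζ).re := by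
  obtain ⟨ξ, hξS, hξ⟩ := Submodule.exists_mem_ne_zero_of_ne_bot hS
  obtain ⟨ζ, hζ, hne⟩ := hP.exists_inner_ne_zero hξ
  refine ⟨inner ℂ ξ ζ • ξ, S.smul_mem _ hξS, ζ, hζ, ?_⟩
  rw [inner_smul_left, Complex.conj_mul', ← Complex.ofReal_pow, Complex.ofReal_re]
  positivity

lemma posPres_smul {T : H →L[ℂ] H} (hT : PosPres P T) {c : ℝ} (hc : 0 ≤ c) :
    PosPres P (c • T) :=
  fun x hx => hP.2.2.1 c hc _ (hT x hx)

end IsSelfDualCone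

/-- Proposition A.3 (existence of a positive ground state): if `e^{-βA} ⊵ 0` w.r.t. `P`
for all `β ≥ 0` and `E(A)` is an eigenvalue of `A`, then `ker (A - E(A))` contains a
nonzero vector belonging to `P`. -/
theorem exists_positive_ground_state [CompleteSpace H] [Nontrivial H]
    (P : Set H) (hP : IsSelfDualCone P) (A : H →L[ℂ] H) (hA : IsSelfAdjoint A)
    (hexp : ∀ β : ℝ, 0 ≤ β → PosPres P (NormedSpace.exp (-(β : ℂ) • A)))
    (heig : LinearMap.ker ((A - ((specInf A : ℂ)) • 1 : H →L[ℂ] H) : H →ₗ[ℂ] H) ≠ ⊥) :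
    ∃ ξ ∈ LinearMap.ker ((A - ((specInf A : ℂ)) • 1 : H →L[ℂ] H) : H →ₗ[ℂ] H), ξ ≠ 0 ∧ ξ ∈ P := by
  set C : H →L[ℂ] H := A - (specInf A : ℂ) • 1
  have hCsa : IsSelfAdjoint C := hA.sub (IsSelfAdjoint.smul (Complex.conj_ofReal _) (.one _))
  have hconv : Convex ℝ P := hP.2.1
  obtain ⟨ξ, hξ, ζ, hζ, hξζ⟩ := hP.exists_mem_re_inner_pos heig
  let := InnerProductSpace.complexToReal (G := H)
  obtain ⟨η, hη, hmin⟩ :=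
    exists_norm_eq_iInf_of_complete_convex ⟨ζ, hζ⟩ hP.1.isComplete hconv ξ
  have hfix : ∀ β : ℝ, 0 ≤ β → NormedSpace.exp (β • -C) η = η := fun β hβ =>
    LipschitzWith.apply_eq_of_norm_sub_eq_iInf hconv hη hmin
      ((NormedSpace.exp (β • -C)).lipschitz.weaken
        (norm_exp_smul_neg_le_one hCsa (spectrum_sub_specInf_nonneg A) hβ))
      (by rw [exp_smul_neg_sub_smul_one]; exact hP.posPres_smul (hexp β hβ) (Real.exp_nonneg _))
      (exp_smul_apply_eq_self_iff.2 (by simpa using hξ) β hβ)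
  refine ⟨η, by simpa using exp_smul_apply_eq_self_iff.1 hfix, ?_, hη⟩
  rintro rfl
  have := (norm_eq_iInf_iff_real_inner_le_zero hconv hη).1 hmin ζ hζ
  rw [sub_zero, sub_zero, real_inner_eq_re_inner] at this
  exact this.not_gt hξζ
end
end

section
/- Let A be a bounded self-adjoint operator on a nontrivial complex Hilbert space ℌ equipped with a self-dual cone 𝔓, and let E(A) be the infimum of the spectrum of A. If e^{−βA} ⊳ 0 w.r.t. 𝔓 for all β > 0, then for every real s > −E(A), the operator A + s·1 is invertible and (A + s·1)^{−1} ⊳ 0 w.r.t. 𝔓. -/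
/-! For `s > -E(A)` the spectrum of `B = A + s` lies in `[ε, ∞)` for some `ε > 0`, so
`‖e^{-tB}‖ ≤ e^{-tε}` and `B⁻¹ = ∫₀^∞ e^{-tB} dt`. As `e^{-tB} = e^{-ts} e^{-tA}` improves
positivity for `t > 0`, every `⟪ξ, e^{-tB} η⟫` with `ξ, η ∈ 𝔓 \ {0}` is a positive real, hence so
is `⟪ξ, B⁻¹ η⟫`; self-duality of `𝔓` then gives `B⁻¹ η > 0`. -/

open scoped ComplexOrder

noncomputable section

variable {H : Type*} [NormedAddCommGroup H] [InnerProductSpace ℂ H]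

open NormedSpace Filter Topology MeasureTheory
open scoped InnerProductSpace

section BanachAlgebra

variable {𝔸 : Type*} [NormedRing 𝔸] [NormedAlgebra ℝ 𝔸] [CompleteSpace 𝔸]

theorem intervalIntegral_exp_smul_mul (a : 𝔸) (T : ℝ) :
    (∫ t in (0 : ℝ)..T, exp (t • a)) * a = exp (T • a) - 1 := by
  have hderiv : ∀ t : ℝ, HasDerivAt (fun t : ℝ => exp (t • a)) (exp (t • a) * a) t :=
    hasDerivAt_exp_smul_const a
  have hcont : Continuous fun t : ℝ => exp (t • a) :=
    (differentiable_exp_smul_const ℝ a).continuous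
  calc (∫ t in (0 : ℝ)..T, exp (t • a)) * a = ∫ t in (0 : ℝ)..T, exp (t • a) * a :=
        (((ContinuousLinearMap.mul ℝ 𝔸).flip a).intervalIntegral_comp_comm
          (hcont.intervalIntegrable 0 T)).symm
    _ = exp (T • a) - exp ((0 : ℝ) • a) :=
        intervalIntegral.integral_eq_sub_of_hasDerivAt (fun t _ => hderiv t)
          ((hcont.mul continuous_const).intervalIntegrable 0 T)
    _ = exp (T • a) - 1 := by rw [zero_smul, exp_zero]

theorem tendsto_intervalIntegral_exp_smul_neg {b : 𝔸} (hb : IsUnit b)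
    (hdecay : Tendsto (fun T : ℝ => exp (T • -b)) atTop (𝓝 0)) :
    Tendsto (fun T : ℝ => ∫ t in (0 : ℝ)..T, exp (t • -b)) atTop (𝓝 (Ring.inverse b)) := by
  have key : ∀ T : ℝ, ∫ t in (0 : ℝ)..T, exp (t • -b) = (1 - exp (T • -b)) * Ring.inverse b := by
    intro T
    have h := intervalIntegral_exp_smul_mul (-b) T
    rw [mul_neg, neg_eq_iff_eq_neg, neg_sub] at h
    rw [← h, mul_assoc, Ring.mul_inverse_cancel b hb, mul_one]
  simp_rw [key]
  simpa using ((tendsto_const_nhds (x := (1 : 𝔸))).sub hdecay).mul_const (Ring.inverse b)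

end BanachAlgebra

theorem exp_add_algebraMap {𝕂 𝔸 : Type*} [RCLike 𝕂] [NormedRing 𝔸] [NormedAlgebra 𝕂 𝔸]
    [CompleteSpace 𝔸] (a : 𝔸) (r : 𝕂) : exp (a + algebraMap 𝕂 𝔸 r) = exp r • exp a := by
  -- `exp` does not depend on this instance; `exp_add_of_commute` is stated for `ℚ`-algebras.
  let : NormedAlgebra ℚ 𝔸 := .restrictScalars ℚ 𝕂 𝔸
  rw [exp_add_of_commute (Algebra.commutes r a).symm, ← algebraMap_exp_comm, ← Algebra.commutes,
    Algebra.smul_def]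

section CStarAlgebra

variable {𝔸 : Type*} [CStarAlgebra 𝔸] {b : 𝔸}

theorem norm_exp_smul_neg_le (hb : IsSelfAdjoint b) {ε : ℝ} (hε : ∀ x ∈ spectrum ℝ b, ε ≤ x)
    {t : ℝ} (ht : 0 ≤ t) : ‖exp (t • -b)‖ ≤ Real.exp (-(t * ε)) := by
  rw [smul_neg, ← neg_smul, ← CFC.real_exp_eq_normedSpace_exp (a := -t • b),
    ← cfc_comp_smul (-t) Real.exp b]
  refine norm_cfc_le (Real.exp_nonneg _) fun x hx => ?_
  rw [Real.norm_of_nonneg (Real.exp_nonneg _), Real.exp_le_exp, smul_eq_mul]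
  nlinarith [hε x hx]

theorem tendsto_exp_smul_neg_atTop (hb : IsSelfAdjoint b) {ε : ℝ} (hε₀ : 0 < ε)
    (hε : ∀ x ∈ spectrum ℝ b, ε ≤ x) : Tendsto (fun T : ℝ => exp (T • -b)) atTop (𝓝 0) := by
  refine squeeze_zero_norm' ((eventually_ge_atTop 0).mono fun T hT =>
    norm_exp_smul_neg_le hb hε hT) ?_
  exact Real.tendsto_exp_atBot.comp <| tendsto_neg_atTop_atBot.comp <|
    tendsto_id.atTop_mul_const hε₀

end CStarAlgebra

theorem pos_of_tendsto_intervalIntegral {f : ℝ → ℂ} (hf : Continuous f) (hpos : ∀ t > 0, 0 < f t)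
    {L : ℂ} (hL : Tendsto (fun T => ∫ t in (0 : ℝ)..T, f t) atTop (𝓝 L)) : 0 < L := by
  set g : ℝ → ℝ := fun t => (f t).re
  have hg : Continuous g := Complex.continuous_re.comp hf
  have hfg : ∀ T, 0 ≤ T → ∫ t in (0 : ℝ)..T, f t = ↑(∫ t in (0 : ℝ)..T, g t) := by
    intro T hT
    rw [← intervalIntegral.integral_ofReal]
    refine intervalIntegral.integral_congr_ae (Eventually.of_forall fun t ht => ?_)
    rw [Set.uIoc_of_le hT] at ht
    exact Complex.eq_re_of_ofReal_le (r := 0) (by exact_mod_cast (hpos t ht.1).le)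
  set δ := ∫ t in (0 : ℝ)..1, g t
  have hδ : 0 < δ := intervalIntegral.intervalIntegral_pos_of_pos_on (hg.intervalIntegrable 0 1)
    (fun t ht => (Complex.pos_iff.1 (hpos t ht.1)).1) zero_lt_one
  have hδT : ∀ T, 1 ≤ T → δ ≤ ∫ t in (0 : ℝ)..T, g t := fun T hT =>
    intervalIntegral.integral_mono_interval le_rfl zero_le_one hT
      ((ae_restrict_mem measurableSet_Ioc).mono fun t ht =>
        (Complex.pos_iff.1 (hpos t ht.1)).1.le)
      (hg.intervalIntegrable 0 T)
  refine (Complex.zero_lt_real.2 hδ).trans_le (ge_of_tendsto hL ?_)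
  filter_upwards [eventually_ge_atTop 1] with T hT
  rw [hfg T (by linarith), Complex.real_le_real]
  exact hδT T hT

theorem exp_neg_smul_add_smul_one {𝔸 : Type*} [NormedRing 𝔸] [NormedAlgebra ℂ 𝔸]
    [CompleteSpace 𝔸] (a : 𝔸) (s t : ℝ) :
    exp (-(t : ℂ) • (a + (s : ℂ) • 1)) = (Real.exp (-(t * s)) : ℂ) • exp (-(t : ℂ) • a) := by
  rw [smul_add, smul_smul, ← Algebra.algebraMap_eq_smul_one, exp_add_algebraMap,
    ← Complex.exp_eq_exp_ℂ, Complex.ofReal_exp]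
  push_cast
  ring_nf

theorem IsSelfDualCone.strictPos_of_inner_pos {P : Set H} (hP : IsSelfDualCone P) {η : H}
    (h : ∀ ξ ∈ P, ξ ≠ 0 → 0 < ⟪ξ, η⟫_ℂ) : StrictPos P η := by
  refine ⟨?_, h⟩
  rw [hP.2.2.2]
  intro ξ hξ
  rcases eq_or_ne ξ 0 with rfl | hξ0
  · simp
  · rw [← inner_conj_symm]
    exact star_nonneg_iff.2 (h ξ hξ hξ0).le

section Spectrum

variable [CompleteSpace H] {A : H →L[ℂ] H}

theorem specInf_le {t : ℝ} (ht : t ∈ spectrum ℝ A) : specInf A ≤ t := by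
  have hset : {t : ℝ | (t : ℂ) ∈ spectrum ℂ A} = spectrum ℝ A := spectrum.preimage_algebraMap ℂ
  rw [specInf, hset]
  exact csInf_le (spectrum.isCompact A).bddBelow ht

theorem specInf_add_le {s x : ℝ} (hx : x ∈ spectrum ℝ (A + (s : ℂ) • 1)) : specInf A + s ≤ x := by
  rw [add_comm, Complex.coe_smul, ← Algebra.algebraMap_eq_smul_one, ← sub_add_cancel x s,
    spectrum.add_mem_add_iff] at hx
  linarith [specInf_le hx]

end Spectrum

theorem exp_posImp_resolvent_posImp_general [CompleteSpace H]
    (P : Set H) (hP : IsSelfDualCone P) (A : H →L[ℂ] H) (hA : IsSelfAdjoint A)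
    (hexp : ∀ β : ℝ, 0 < β → PosImp P (NormedSpace.exp (-(β : ℂ) • A))) :
    ∀ s : ℝ, -specInf A < s →
      IsUnit (A + (s : ℂ) • 1) ∧ PosImp P (Ring.inverse (A + (s : ℂ) • 1)) := by
  intro s hs
  set B := A + (s : ℂ) • 1
  have hB : IsSelfAdjoint B := hA.add (by simp [IsSelfAdjoint, star_smul])
  have hε : 0 < specInf A + s := by linarith
  have hunit : IsUnit B := by
    by_contra h
    linarith [specInf_add_le ((spectrum.zero_mem_iff ℝ).2 h)]
  refine ⟨hunit, fun η hη hη0 => hP.strictPos_of_inner_pos fun ξ hξ hξ0 => ?_⟩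
  let Φ : (H →L[ℂ] H) →L[ℂ] ℂ := (innerSL ℂ ξ).comp (ContinuousLinearMap.apply ℂ H η)
  have hu : Continuous fun t : ℝ => exp (t • -B) :=
    (differentiable_exp_smul_const ℝ (-B)).continuous
  refine pos_of_tendsto_intervalIntegral (Φ.continuous.comp hu) (fun t ht => ?_) ?_
  · rw [Function.comp_apply, smul_neg, ← Complex.coe_smul, ← neg_smul, exp_neg_smul_add_smul_one]
    simp only [Φ, ContinuousLinearMap.comp_apply, ContinuousLinearMap.apply_apply,
      innerSL_apply_apply, smul_apply, inner_smul_right]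
    exact mul_pos (Complex.zero_lt_real.2 (Real.exp_pos _)) ((hexp t ht η hη hη0).2 ξ hξ hξ0)
  · refine ((Φ.continuous.tendsto _).comp (tendsto_intervalIntegral_exp_smul_neg hunit
      (tendsto_exp_smul_neg_atTop hB hε fun x hx => specInf_add_le hx))).congr fun T => ?_
    exact (Φ.intervalIntegral_comp_comm (hu.intervalIntegrable 0 T)).symm

/-- Proposition A.6: if `e^{-βA} ⊳ 0` w.r.t. `P` for all `β > 0`, then for all
`s > -E(A)` the operator `A + s` is invertible and `(A + s)⁻¹ ⊳ 0` w.r.t. `P`. -/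
theorem exp_posImp_resolvent_posImp [CompleteSpace H] [Nontrivial H]
    (P : Set H) (hP : IsSelfDualCone P) (A : H →L[ℂ] H) (hA : IsSelfAdjoint A)
    (hexp : ∀ β : ℝ, 0 < β → PosImp P (NormedSpace.exp (-(β : ℂ) • A))) :
    ∀ s : ℝ, -specInf A < s →
      IsUnit (A + (s : ℂ) • 1) ∧ PosImp P (Ring.inverse (A + (s : ℂ) • 1)) :=
  exp_posImp_resolvent_posImp_general P hP A hA hexp
end
end

section
/- Let k ≥ 1 and, for j = 1, …, k, let Yⱼ be an nⱼ × nⱼ real matrix that is ergodic w.r.t. the nonnegative orthant ℝ₊^{nⱼ}. Let M be the real matrix indexed by the product index set ∏ⱼ {1, …, nⱼ} with entries M(a, b) = Σ_{j=1}^{k} Yⱼ(aⱼ, bⱼ) · ∏_{i ≠ j} [aᵢ = bᵢ] (the Kronecker sum Σⱼ 1 ⊗ ⋯ ⊗ Yⱼ ⊗ ⋯ ⊗ 1, where [aᵢ = bᵢ] is 1 if aᵢ = bᵢ and 0 otherwise). Then M is ergodic w.r.t. the nonnegative orthant of ℝ^{n₁⋯n_k}. -/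
/-! A matrix is ergodic exactly when it is entrywise nonnegative and the graph of its positive
entries is strongly connected (paths of length zero allowed). In the graph of the Kronecker sum, changing one
coordinate `aⱼ` along an edge of the graph of `Yⱼ` is an edge, so any index `a` is joined to any `b`
by correcting one coordinate at a time. -/

noncomputable section

open scoped Matrix

def MatErgodic {m : Type*} [Fintype m] [DecidableEq m] (Y : Matrix m m ℝ) : Prop :=
  (∀ x : m → ℝ, (∀ i, 0 ≤ x i) → ∀ i, 0 ≤ Y.mulVec x i) ∧
  ∀ x y : m → ℝ, (∀ i, 0 ≤ x i) → (∀ i, 0 ≤ y i) → x ≠ 0 → y ≠ 0 →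
    ∃ ℓ : ℕ, 0 < x ⬝ᵥ (Y ^ ℓ).mulVec y

open Relation Function

theorem Relation.reflTransGen_pi_of_update {ι : Type*} [Fintype ι] [DecidableEq ι]
    {π : ι → Type*} {r : (∀ i, π i) → (∀ i, π i) → Prop}
    (h : ∀ x i v, ReflTransGen r x (update x i v)) (a b : ∀ i, π i) : ReflTransGen r a b := by
  have hpiecewise : ∀ s : Finset ι, ReflTransGen r a (s.piecewise b a) := by
    intro s
    induction s using Finset.induction_on with
    | empty => exact .refl
    | insert j s _ ih => rw [Finset.piecewise_insert]; exact ih.trans (h _ _ _)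
  simpa using hpiecewise Finset.univ

namespace Matrix

section Nonneg

variable {m n R : Type*} [Fintype n] [Ring R] [LinearOrder R] [IsStrictOrderedRing R]

theorem exists_pow_apply_pos_iff_reflTransGen [DecidableEq n] {A : Matrix n n R}
    (hA : ∀ i j, 0 ≤ A i j) {i j : n} :
    (∃ k, 0 < (A ^ k) i j) ↔ ReflTransGen (fun i j => 0 < A i j) i j := by
  let := toQuiver A
  have hpath : (∃ k, 0 < (A ^ k) i j) ↔ Nonempty (Quiver.Path i j) := by
    simp_rw [pow_apply_pos_iff_nonempty_path hA]
    exact ⟨fun ⟨_, ⟨p, _⟩⟩ => ⟨p⟩, fun ⟨p⟩ => ⟨_, ⟨p, rfl⟩⟩⟩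
  rw [hpath]
  clear hpath
  constructor
  · rintro ⟨p⟩
    induction p with
    | nil => exact .refl
    | cons _ e ih => exact ih.tail e.down
  · intro h
    induction h with
    | refl => exact ⟨.nil⟩
    | tail _ hbc ih => exact ih.elim fun p => ⟨p.cons ⟨hbc⟩⟩

theorem mulVec_apply_nonneg {A : Matrix m n R} (hA : ∀ i j, 0 ≤ A i j) {y : n → R}
    (hy : ∀ j, 0 ≤ y j) (i : m) : 0 ≤ (A *ᵥ y) i :=
  Finset.sum_nonneg fun j _ => mul_nonneg (hA i j) (hy j)

theorem mulVec_apply_pos {A : Matrix m n R} (hA : ∀ i j, 0 ≤ A i j) {y : n → R}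
    (hy : ∀ j, 0 ≤ y j) {i : m} {j : n} (hij : 0 < A i j) (hyj : 0 < y j) : 0 < (A *ᵥ y) i :=
  Finset.sum_pos' (fun k _ => mul_nonneg (hA i k) (hy k)) ⟨j, Finset.mem_univ j, mul_pos hij hyj⟩

theorem dotProduct_mulVec_pos [Fintype m] {A : Matrix m n R} (hA : ∀ i j, 0 ≤ A i j)
    {x : m → R} {y : n → R} (hx : ∀ i, 0 ≤ x i) (hy : ∀ j, 0 ≤ y j) {i : m} {j : n} (hxi : 0 < x i)
    (hij : 0 < A i j) (hyj : 0 < y j) : 0 < x ⬝ᵥ A *ᵥ y :=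
  Finset.sum_pos' (fun k _ => mul_nonneg (hx k) (mulVec_apply_nonneg hA hy k))
    ⟨i, Finset.mem_univ i, mul_pos hxi (mulVec_apply_pos hA hy hij hyj)⟩

end Nonneg

section KroneckerSum

variable {K R : Type*} [Fintype K] [DecidableEq K] {ι : K → Type*} [∀ j, DecidableEq (ι j)]
  [CommSemiring R] [PartialOrder R] [IsOrderedRing R] {Y : ∀ j, Matrix (ι j) (ι j) R}

/-- The Kronecker sum `∑ⱼ 1 ⊗ ⋯ ⊗ Yⱼ ⊗ ⋯ ⊗ 1`. -/
def kroneckerSum (Y : ∀ j, Matrix (ι j) (ι j) R) : Matrix (∀ j, ι j) (∀ j, ι j) R :=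
  of fun a b => ∑ j, Y j (a j) (b j) * ∏ i ∈ Finset.univ.erase j, if a i = b i then 1 else 0

theorem kroneckerSum_apply_nonneg (hY : ∀ j u v, 0 ≤ Y j u v) (a b : ∀ j, ι j) :
    0 ≤ kroneckerSum Y a b :=
  Finset.sum_nonneg fun j _ =>
    mul_nonneg (hY j _ _) (Finset.prod_nonneg fun i _ => by split_ifs <;> simp)

theorem le_kroneckerSum_update (hY : ∀ j u v, 0 ≤ Y j u v) (x : ∀ j, ι j) (j : K) (u v : ι j) :
    Y j u v ≤ kroneckerSum Y (update x j u) (update x j v) := by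
  refine le_trans (le_of_eq ?_) (Finset.single_le_sum (fun j' _ => ?_) (Finset.mem_univ j))
  · rw [update_self, update_self, Finset.prod_eq_one, mul_one]
    intro i hi
    simp [update_of_ne (Finset.ne_of_mem_erase hi)]
  · exact mul_nonneg (hY j' _ _) (Finset.prod_nonneg fun i _ => by split_ifs <;> simp)

theorem reflTransGen_kroneckerSum (hY : ∀ j u v, 0 ≤ Y j u v)
    (hconn : ∀ j (u v : ι j), ReflTransGen (fun u v => 0 < Y j u v) u v) (a b : ∀ j, ι j) :
    ReflTransGen (fun a b => 0 < kroneckerSum Y a b) a b := by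
  refine reflTransGen_pi_of_update (fun x j v => ?_) a b
  have hlift := (hconn j (x j) v).lift (p := fun a b => 0 < kroneckerSum Y a b) (update x j)
    fun u w huw => huw.trans_le (le_kroneckerSum_update hY x j u w)
  rwa [onFun, update_eq_self] at hlift

end KroneckerSum

end Matrix

open Matrix

theorem matErgodic_iff {m : Type*} [Fintype m] [DecidableEq m] {Y : Matrix m m ℝ} :
    MatErgodic Y ↔ (∀ a b, 0 ≤ Y a b) ∧ ∀ a b, ReflTransGen (fun a b => 0 < Y a b) a b := by
  have hsingle : ∀ a, (∀ i, 0 ≤ (Pi.single a 1 : m → ℝ) i) ∧ (Pi.single a 1 : m → ℝ) ≠ 0 :=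
    fun a => ⟨fun i => by rw [Pi.single_apply]; split_ifs <;> norm_num,
      Pi.single_ne_zero_iff.2 one_ne_zero⟩
  constructor
  · rintro ⟨horthant, hpos⟩
    have hY : ∀ a b, 0 ≤ Y a b := fun a b => by
      simpa [mulVec_single_one] using horthant _ (hsingle b).1 a
    refine ⟨hY, fun a b => (exists_pow_apply_pos_iff_reflTransGen hY).1 ?_⟩
    obtain ⟨ℓ, hℓ⟩ := hpos _ _ (hsingle a).1 (hsingle b).1 (hsingle a).2 (hsingle b).2
    exact ⟨ℓ, by simpa [mulVec_single_one, single_one_dotProduct] using hℓ⟩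
  · rintro ⟨hY, hconn⟩
    have hsupport : ∀ z : m → ℝ, (∀ i, 0 ≤ z i) → z ≠ 0 → ∃ i, 0 < z i := fun z hz hz0 =>
      let ⟨i, hi⟩ := ne_iff.1 hz0
      ⟨i, (hz i).lt_of_ne' hi⟩
    refine ⟨fun x hx => mulVec_apply_nonneg hY hx, fun x y hx hy hx0 hy0 => ?_⟩
    obtain ⟨a, ha⟩ := hsupport x hx hx0
    obtain ⟨b, hb⟩ := hsupport y hy hy0
    obtain ⟨ℓ, hℓ⟩ := (exists_pow_apply_pos_iff_reflTransGen hY).2 (hconn a b)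
    exact ⟨ℓ, dotProduct_mulVec_pos (pow_apply_nonneg hY ℓ) hx hy ha hℓ hb⟩

theorem matErgodic_kroneckerSum {K : Type*} [Fintype K] [DecidableEq K] {ι : K → Type*}
    [∀ j, Fintype (ι j)] [∀ j, DecidableEq (ι j)] {Y : ∀ j, Matrix (ι j) (ι j) ℝ}
    (hY : ∀ j, MatErgodic (Y j)) : MatErgodic (kroneckerSum Y) := by
  simp only [matErgodic_iff] at hY ⊢
  exact ⟨kroneckerSum_apply_nonneg fun j => (hY j).1,
    reflTransGen_kroneckerSum (fun j => (hY j).1) fun j => (hY j).2⟩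

theorem kronecker_sum_ergodic_general (k : ℕ) (n : Fin k → ℕ)
    (Y : ∀ j, Matrix (Fin (n j)) (Fin (n j)) ℝ) (hY : ∀ j, MatErgodic (Y j))
    (M : Matrix (∀ j, Fin (n j)) (∀ j, Fin (n j)) ℝ)
    (hM : ∀ a b, M a b = ∑ j, Y j (a j) (b j) *
      ∏ i ∈ Finset.univ.erase j, (if a i = b i then (1 : ℝ) else 0)) :
    MatErgodic M := by
  obtain rfl : M = kroneckerSum Y := Matrix.ext hM
  exact matErgodic_kroneckerSum hY

/-- Lemma B.2: the Kronecker sum `M = Σⱼ 1 ⊗ ⋯ ⊗ Yⱼ ⊗ ⋯ ⊗ 1` of ergodic matrices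
`Yⱼ` (each ergodic w.r.t. the nonnegative orthant of `ℝ^{nⱼ}`) is ergodic w.r.t. the
nonnegative orthant of `ℝ^{n₁⋯n_k}`. -/
theorem kronecker_sum_ergodic (k : ℕ) (hk : 1 ≤ k) (n : Fin k → ℕ)
    (Y : ∀ j, Matrix (Fin (n j)) (Fin (n j)) ℝ) (hY : ∀ j, MatErgodic (Y j))
    (M : Matrix (∀ j, Fin (n j)) (∀ j, Fin (n j)) ℝ)
    (hM : ∀ a b, M a b = ∑ j, Y j (a j) (b j) *
      ∏ i ∈ Finset.univ.erase j, (if a i = b i then (1 : ℝ) else 0)) :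
    MatErgodic M :=
  kronecker_sum_ergodic_general k n Y hY M hM
end
end
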